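/- arXiv:2208.14522 — 3 statements merged into one kernel-verified Lean document; each statement's English description precedes it below -/
import Mathlib

section
/- For fixed k ≥ 1, the k-th Fourier coefficient a_k(0) = r^{-k}/(ε √((α/ε)² - 1)) with r = α/ε + √((α/ε)² - 1) satisfies a_k(0) = (1/α)(ε/(2α))^k + O(ε^{k+2}) as ε → 0⁺. -/
open Real Filter Asymptotics Topology

/-! Multiplying numerator and denominator by `ε`, the coefficient equals `ε ^ k * G (ε ^ 2)` with
`G x = 1 / ((α + √(α² - x)) ^ k * √(α² - x))`. The function `G` is differentiable at `0`, where
`√(α² - x) = α`, so `G (ε ^ 2) = G 0 + O(ε²) = (1 / α) (1 / (2α)) ^ k + O(ε²)`. -/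

noncomputable def reducedCoeff (α : ℝ) (k : ℕ) (x : ℝ) : ℝ :=
  1 / ((α + √(α ^ 2 - x)) ^ k * √(α ^ 2 - x))

lemma reducedCoeff_zero {α : ℝ} (hα : 0 < α) (k : ℕ) :
    reducedCoeff α k 0 = 1 / α * (1 / (2 * α)) ^ k := by
  rw [reducedCoeff, sub_zero, Real.sqrt_sq hα.le, ← two_mul, div_pow, one_pow]
  field_simp

lemma differentiableAt_reducedCoeff {α : ℝ} (hα : 0 < α) (k : ℕ) :
    DifferentiableAt ℝ (reducedCoeff α k) 0 := by
  have hsqrt : DifferentiableAt ℝ (fun x : ℝ => √(α ^ 2 - x)) 0 :=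
    ((differentiableAt_const _).sub differentiableAt_id).sqrt (by simpa using hα.ne')
  refine (differentiableAt_const 1).div ((((differentiableAt_const α).add hsqrt).pow k).mul hsqrt) ?_
  simp only [sub_zero, Real.sqrt_sq hα.le]
  positivity

lemma sqrt_div_sq_sub_one (α : ℝ) {ε : ℝ} (hε : 0 < ε) :
    √((α / ε) ^ 2 - 1) = √(α ^ 2 - ε ^ 2) / ε := by
  rw [show (α / ε) ^ 2 - 1 = (α ^ 2 - ε ^ 2) / ε ^ 2 by field_simp,
    Real.sqrt_div' _ (by positivity), Real.sqrt_sq hε.le]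

lemma coeff_eq_pow_mul_reducedCoeff (α : ℝ) (k : ℕ) {ε : ℝ} (hε : 0 < ε) :
    1 / (α / ε + √((α / ε) ^ 2 - 1)) ^ k / (ε * √((α / ε) ^ 2 - 1)) =
      ε ^ k * reducedCoeff α k (ε ^ 2) := by
  rw [sqrt_div_sq_sub_one α hε, reducedCoeff, ← add_div, mul_div_cancel₀ _ hε.ne', div_pow]
  field_simp

lemma isBigO_pow_mul_sub_comp_sq {G : ℝ → ℝ} (hG : DifferentiableAt ℝ G 0) (k : ℕ) :
    (fun ε : ℝ => ε ^ k * (G (ε ^ 2) - G 0)) =O[𝓝 0] fun ε : ℝ => ε ^ (k + 2) := by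
  have hsq : Tendsto (fun ε : ℝ => ε ^ 2) (𝓝 0) (𝓝 0) := by
    simpa using (continuous_pow 2).tendsto (0 : ℝ)
  have hdiff : (fun ε : ℝ => G (ε ^ 2) - G 0) =O[𝓝 0] fun ε : ℝ => ε ^ 2 := by
    simpa only [Function.comp_def, sub_zero] using hG.isBigO_sub.comp_tendsto hsq
  simpa only [pow_add] using (isBigO_refl (fun ε : ℝ => ε ^ k) _).mul hdiff

theorem stmt_13_general (α : ℝ) (hα : 0 < α) (k : ℕ) :
    (fun ε : ℝ =>
        (1 / (α/ε + Real.sqrt ((α/ε)^2 - 1))^k) / (ε * Real.sqrt ((α/ε)^2 - 1))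
          - (1/α) * (ε / (2*α))^k)
      =O[nhdsWithin 0 (Set.Ioi 0)] (fun ε : ℝ => ε^(k+2)) := by
  refine ((isBigO_pow_mul_sub_comp_sq (differentiableAt_reducedCoeff hα k) k).mono
    nhdsWithin_le_nhds).congr' ?_ EventuallyEq.rfl
  filter_upwards [self_mem_nhdsWithin] with ε hε
  rw [coeff_eq_pow_mul_reducedCoeff α k hε, reducedCoeff_zero hα, div_eq_mul_one_div ε, mul_pow]
  ring

/-- a_k(0) = r^{-k}/(ε √((α/ε)² - 1)) with r = α/ε + √((α/ε)² - 1) satisfies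
a_k(0) = (1/α)(ε/(2α))^k + O(ε^{k+2}) as ε → 0⁺. -/
theorem stmt_13 (α : ℝ) (hα : 0 < α) (k : ℕ) (hk : 1 ≤ k) :
    (fun ε : ℝ =>
        (1 / (α/ε + Real.sqrt ((α/ε)^2 - 1))^k) / (ε * Real.sqrt ((α/ε)^2 - 1))
          - (1/α) * (ε / (2*α))^k)
      =O[nhdsWithin 0 (Set.Ioi 0)] (fun ε : ℝ => ε^(k+2)) :=
  stmt_13_general α hα k
end

section
/- The function v(x) = ε e^{-α} x² / (2 - 8 ε e^{-α} log(x²)) satisfies: v(x) → 0, v'(x) → 0, v''(x) → 0 as x → 0⁺, while v'''(x) ~ C/(x log²|x|) as x → 0⁺ for some nonzero constant C (in particular v''' is unbounded near 0). -/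
/-!
With `c = ε e^{-α}` and `u = 1 / (2 - 16 c log x)` one has `v = c x² u` and `u' = 16 c u² / x`,
so each derivative of `v` is a polynomial in `u` times a power of `x`:
`v' = x (2cu + 16c²u²)`, `v'' = 2cu + 48c²u² + 512c³u³` and
`v''' = (32c²u² + 1536c³u³ + 24576c⁴u⁴) / x`.
As `x → 0⁺`, `u → 0` while `u log x → -1/(16c)`; this gives the three limits and
`v''' ~ 32c²u²/x ~ 1 / (8 x log² x)`.
-/

open Real Filter Asymptotics Set Topology

noncomputable def invDenom (c x : ℝ) : ℝ := (2 - 16 * c * log x)⁻¹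

section

variable {c x : ℝ}

lemma hasDerivAt_invDenom (hx : x ≠ 0) (hD : 2 - 16 * c * log x ≠ 0) :
    HasDerivAt (invDenom c) (16 * c * invDenom c x ^ 2 / x) x := by
  refine ((((hasDerivAt_log hx).const_mul (16 * c)).const_sub 2).inv hD).congr_deriv ?_
  simp only [invDenom]
  field_simp

lemma hasDerivAt_sq_mul_invDenom (hx : x ≠ 0) (hD : 2 - 16 * c * log x ≠ 0) :
    HasDerivAt (fun y => c * y ^ 2 * invDenom c y)
      (x * (2 * c * invDenom c x + 16 * c ^ 2 * invDenom c x ^ 2)) x := by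
  refine (((hasDerivAt_pow 2 x).const_mul c).mul (hasDerivAt_invDenom hx hD)).congr_deriv ?_
  field_simp
  ring

lemma hasDerivAt_mul_invDenom_quadratic (hx : x ≠ 0) (hD : 2 - 16 * c * log x ≠ 0) :
    HasDerivAt (fun y => y * (2 * c * invDenom c y + 16 * c ^ 2 * invDenom c y ^ 2))
      (2 * c * invDenom c x + 48 * c ^ 2 * invDenom c x ^ 2
        + 512 * c ^ 3 * invDenom c x ^ 3) x := by
  have hu := hasDerivAt_invDenom hx hD
  refine ((hasDerivAt_id x).mul
    ((hu.const_mul (2 * c)).add ((hu.pow 2).const_mul (16 * c ^ 2)))).congr_deriv ?_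
  simp only [Pi.add_apply, Pi.pow_apply, id]
  field_simp
  ring

lemma hasDerivAt_invDenom_cubic (hx : x ≠ 0) (hD : 2 - 16 * c * log x ≠ 0) :
    HasDerivAt (fun y => 2 * c * invDenom c y + 48 * c ^ 2 * invDenom c y ^ 2
        + 512 * c ^ 3 * invDenom c y ^ 3)
      ((32 * c ^ 2 * invDenom c x ^ 2 + 1536 * c ^ 3 * invDenom c x ^ 3
        + 24576 * c ^ 4 * invDenom c x ^ 4) / x) x := by
  have hu := hasDerivAt_invDenom hx hD
  refine (((hu.const_mul (2 * c)).add ((hu.pow 2).const_mul (48 * c ^ 2))).add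
    ((hu.pow 3).const_mul (512 * c ^ 3))).congr_deriv ?_
  field_simp
  ring

lemma denom_pos_of_mem_Ioo (hc : 0 ≤ c) (hx : x ∈ Ioo (0 : ℝ) 1) :
    0 < 2 - 16 * c * log x := by
  have := log_neg hx.1 hx.2
  nlinarith

lemma eqOn_deriv_sq_mul_invDenom (hc : 0 ≤ c) :
    EqOn (deriv fun y => c * y ^ 2 * invDenom c y)
      (fun x => x * (2 * c * invDenom c x + 16 * c ^ 2 * invDenom c x ^ 2)) (Ioo 0 1) :=
  fun _ hx => (hasDerivAt_sq_mul_invDenom hx.1.ne' (denom_pos_of_mem_Ioo hc hx).ne').deriv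

lemma eqOn_deriv_deriv_sq_mul_invDenom (hc : 0 ≤ c) :
    EqOn (deriv (deriv fun y => c * y ^ 2 * invDenom c y))
      (fun x => 2 * c * invDenom c x + 48 * c ^ 2 * invDenom c x ^ 2
        + 512 * c ^ 3 * invDenom c x ^ 3) (Ioo 0 1) := fun _ hx =>
  ((eqOn_deriv_sq_mul_invDenom hc).deriv isOpen_Ioo hx).trans
    (hasDerivAt_mul_invDenom_quadratic hx.1.ne' (denom_pos_of_mem_Ioo hc hx).ne').deriv

lemma eqOn_deriv_deriv_deriv_sq_mul_invDenom (hc : 0 ≤ c) :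
    EqOn (deriv (deriv (deriv fun y => c * y ^ 2 * invDenom c y)))
      (fun x => (32 * c ^ 2 * invDenom c x ^ 2 + 1536 * c ^ 3 * invDenom c x ^ 3
        + 24576 * c ^ 4 * invDenom c x ^ 4) / x) (Ioo 0 1) := fun _ hx =>
  ((eqOn_deriv_deriv_sq_mul_invDenom hc).deriv isOpen_Ioo hx).trans
    (hasDerivAt_invDenom_cubic hx.1.ne' (denom_pos_of_mem_Ioo hc hx).ne').deriv

lemma tendsto_log_mul_invDenom (hc : c ≠ 0) :
    Tendsto (fun x => log x * invDenom c x) (𝓝[>] 0) (𝓝 (-(16 * c)⁻¹)) := by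
  have hinv : Tendsto (fun x => (log x)⁻¹) (𝓝[>] 0) (𝓝 0) :=
    tendsto_log_nhdsGT_zero.inv_tendsto_atBot
  have h := ((hinv.const_mul 2).sub_const (16 * c)).inv₀ (by simpa using hc)
  rw [mul_zero, zero_sub, inv_neg] at h
  refine h.congr' ?_
  filter_upwards [Ioo_mem_nhdsGT one_pos] with x hx
  have hlog := (log_neg hx.1 hx.2).ne
  simp only [invDenom]
  field_simp

lemma tendsto_invDenom (hc : c ≠ 0) : Tendsto (invDenom c) (𝓝[>] 0) (𝓝 0) := by
  have h := tendsto_log_nhdsGT_zero.inv_tendsto_atBot.mul (tendsto_log_mul_invDenom hc)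
  rw [zero_mul] at h
  refine h.congr' ?_
  filter_upwards [Ioo_mem_nhdsGT one_pos] with x hx
  rw [Pi.inv_apply, inv_mul_cancel_left₀ (log_neg hx.1 hx.2).ne]

lemma isEquivalent_invDenom_quartic_div (hc : c ≠ 0) :
    (fun x => (32 * c ^ 2 * invDenom c x ^ 2 + 1536 * c ^ 3 * invDenom c x ^ 3
        + 24576 * c ^ 4 * invDenom c x ^ 4) / x)
      ~[𝓝[>] 0] fun x => 1 / 8 / (x * log |x| ^ 2) := by
  have hU : Ioo (0 : ℝ) 1 ∈ 𝓝[>] 0 := Ioo_mem_nhdsGT one_pos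
  have hL := tendsto_log_mul_invDenom hc
  have hu := tendsto_invDenom hc
  -- the ratio of the two sides, written through `u log x` and `u`
  have hlim : Tendsto (fun x => 8 * (log x * invDenom c x) ^ 2
      * (32 * c ^ 2 + (1536 * c ^ 3 * invDenom c x + 24576 * c ^ 4 * invDenom c x ^ 2)))
      (𝓝[>] 0) (𝓝 1) := by
    convert ((hL.pow 2).const_mul 8).mul
      (((hu.const_mul _).add ((hu.pow 2).const_mul _)).const_add (32 * c ^ 2)) using 2
    field_simp
    ring
  rw [isEquivalent_iff_tendsto_one]
  · refine hlim.congr' ?_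
    filter_upwards [hU] with x hx
    have hlog := (log_neg hx.1 hx.2).ne
    have hx0 := hx.1.ne'
    simp only [Pi.div_apply, abs_of_pos hx.1]
    field_simp
    ring
  · filter_upwards [hU] with x hx
    simp [abs_of_pos hx.1, hx.1.ne', (log_neg hx.1 hx.2).ne]

end

/-- For v(x) = ε e^{-α} x² / (2 - 8 ε e^{-α} log(x²)):
v, v', v'' → 0 as x → 0⁺, while v''' ~ C/(x log²|x|) as x → 0⁺ for some C ≠ 0. -/
theorem stmt_15 (α ε : ℝ) (hε : 0 < ε) :
    let v : ℝ → ℝ := fun x =>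
      ε * Real.exp (-α) * x^2 / (2 - 8 * ε * Real.exp (-α) * Real.log (x^2))
    Tendsto v (nhdsWithin 0 (Set.Ioi 0)) (nhds 0) ∧
    Tendsto (deriv v) (nhdsWithin 0 (Set.Ioi 0)) (nhds 0) ∧
    Tendsto (deriv (deriv v)) (nhdsWithin 0 (Set.Ioi 0)) (nhds 0) ∧
    ∃ C : ℝ, C ≠ 0 ∧
      (deriv (deriv (deriv v))) ~[nhdsWithin 0 (Set.Ioi 0)]
        (fun x => C / (x * (Real.log |x|)^2)) := by
  intro v
  set c := ε * exp (-α)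
  have hc : 0 < c := by positivity
  have hv : v = fun y => c * y ^ 2 * invDenom c y := by
    funext y
    simp only [v, invDenom, log_pow]
    push_cast
    ring
  rw [hv]
  have hU : Ioo (0 : ℝ) 1 ∈ 𝓝[>] 0 := Ioo_mem_nhdsGT one_pos
  have hx : Tendsto (fun x : ℝ => x) (𝓝[>] 0) (𝓝 0) := nhdsWithin_le_nhds
  have hu := tendsto_invDenom hc.ne'
  refine ⟨?_, ?_, ?_, 1 / 8, by norm_num, ?_⟩
  · simpa using ((hx.pow 2).const_mul c).mul hu
  · refine Tendsto.congr' (eventuallyEq_of_mem hU (eqOn_deriv_sq_mul_invDenom hc.le)).symm ?_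
    simpa using hx.mul ((hu.const_mul (2 * c)).add ((hu.pow 2).const_mul (16 * c ^ 2)))
  · refine Tendsto.congr' (eventuallyEq_of_mem hU (eqOn_deriv_deriv_sq_mul_invDenom hc.le)).symm ?_
    simpa using ((hu.const_mul (2 * c)).add ((hu.pow 2).const_mul (48 * c ^ 2))).add
      ((hu.pow 3).const_mul (512 * c ^ 3))
  · exact (isEquivalent_invDenom_quartic_div hc.ne').congr_left
      (eventuallyEq_of_mem hU (eqOn_deriv_deriv_deriv_sq_mul_invDenom hc.le)).symm
end

section
/- The solvability computation: substituting g₃ with polynomial ansatz g₃(ξ) = c₀ + c₂(ξ²-2) into σ'(ξ² - 2) - g₃ + (1/2)ξ g₃' - g₃'' = -8σ²ξ², one finds a solution exists (with c₀ = -2σ' and c₂ arbitrary) if and only if σ' = -8σ². -/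
/-- Substituting the polynomial ansatz g₃(ξ) = c₀ + c₂(ξ² - 2) into
σ'(ξ² - 2) - g₃ + (1/2)ξ g₃' - g₃'' = -8σ²ξ², a solution exists
(with c₀ = -2σ' and c₂ arbitrary) if and only if σ' = -8σ². -/
theorem stmt_17 (σ ds : ℝ) :
    ∀ c₀ c₂ : ℝ,
      ((∀ ξ : ℝ,
          ds * (ξ^2 - 2) - (c₀ + c₂ * (ξ^2 - 2)) + (1/2) * ξ * (2 * c₂ * ξ) - 2 * c₂
            = -8 * σ^2 * ξ^2)
        ↔ (ds = -8 * σ^2 ∧ c₀ = -2 * ds)) := by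
  intro c₀ c₂
  constructor
  · intro h
    have h0 := h 0
    have h1 := h 1
    constructor <;> nlinarith [h0, h1]
  · rintro ⟨h1, h2⟩ ξ
    subst h2
    nlinarith [h1]
end
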